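/- arXiv:1502.07414 — 3 statements merged into one kernel-verified Lean document; each statement's English description precedes it below -/
import Mathlib

section
/- Property P1 (ordering of cost differences): suppose x¹, x² are social states with exposures e(x¹) < e(x²). Then for every d ∈ 𝒟: 0 < C_{d,P}(x²) − C_{d,P}(x¹) < C_{d,I}(x²) − C_{d,I}(x¹) ≤ C_{d,N}(x²) − C_{d,N}(x¹), where C_{d,P}(x) = τ·(1 + d·e(x))·L_P + c_P, C_{d,N}(x) = τ·(1 + d·e(x))·L_U, C_{d,I}(x) = C_{d,N}(x) + c_I − min(Cov_max, ξ·max(0, C_{d,N}(x) − ded)), under the assumptions τ > 0, d ≥ 1, 0 < L_P < (1 − ξ)·L_U, ξ ∈ (0,1], Cov_max ≥ 0, ded ≥ 0. -/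
/-!
With `Δ = τ d (e₂ - e₁) > 0`, the protection and no-action costs grow by exactly `Δ L_P` and
`Δ L_U`. The insurance payout is monotone and `ξ`-Lipschitz in the loss, so the insured cost grows
by at least `(1 - ξ) Δ L_U` and at most `Δ L_U`; the hypothesis `L_P < (1 - ξ) L_U` then gives the
strict middle inequality.
-/

lemma min_sub_min_le_sub {α : Type*} [AddCommGroup α] [LinearOrder α] [IsOrderedAddMonoid α]
    (c : α) {a b : α} (hab : a ≤ b) : min c b - min c a ≤ b - a := by
  rcases le_total c a with hca | hac
  · rw [min_eq_left hca, min_eq_left (hca.trans hab), sub_self]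
    exact sub_nonneg.2 hab
  · rw [min_eq_right hac]
    exact sub_le_sub_right (min_le_right c b) a

/-- The paper's `Ins(x, d)` as a function of the no-action cost `c = C_{d,N}(x)`. -/
def insurance (Cov ξ ded c : ℝ) : ℝ := min Cov (ξ * max 0 (c - ded))

section insurance

variable {Cov ξ ded : ℝ}

lemma insurance_mono (hξ : 0 ≤ ξ) : Monotone (insurance Cov ξ ded) := fun _ _ h =>
  min_le_min_left Cov <| mul_le_mul_of_nonneg_left (max_le_max_left 0 (sub_le_sub_right h ded)) hξ

lemma insurance_sub_le (hξ : 0 ≤ ξ) {c₁ c₂ : ℝ} (hc : c₁ ≤ c₂) :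
    insurance Cov ξ ded c₂ - insurance Cov ξ ded c₁ ≤ ξ * (c₂ - c₁) := by
  have hmax : max 0 (c₂ - ded) - max 0 (c₁ - ded) ≤ c₂ - c₁ := by
    simpa [max_eq_right (sub_nonneg.2 hc)] using max_sub_max_le_max 0 (c₂ - ded) 0 (c₁ - ded)
  calc insurance Cov ξ ded c₂ - insurance Cov ξ ded c₁
      ≤ ξ * max 0 (c₂ - ded) - ξ * max 0 (c₁ - ded) :=
        min_sub_min_le_sub Cov <|
          mul_le_mul_of_nonneg_left (max_le_max_left 0 (sub_le_sub_right hc ded)) hξ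
    _ = ξ * (max 0 (c₂ - ded) - max 0 (c₁ - ded)) := (mul_sub ξ _ _).symm
    _ ≤ ξ * (c₂ - c₁) := mul_le_mul_of_nonneg_left hmax hξ

end insurance

theorem property_P1_general (τ LP LU cP cI ξ ded Cov : ℝ)
    (hτ0 : 0 < τ)
    (hLP : 0 < LP) (hL : LP < (1 - ξ) * LU)
    (hξ0 : 0 < ξ) (hξ1 : ξ ≤ 1)
    (d : ℕ) (hd : 1 ≤ d)
    (e₁ e₂ : ℝ) (hlt : e₁ < e₂) :
    0 < (τ * (1 + d * e₂) * LP + cP) - (τ * (1 + d * e₁) * LP + cP) ∧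
    (τ * (1 + d * e₂) * LP + cP) - (τ * (1 + d * e₁) * LP + cP)
      < (τ * (1 + d * e₂) * LU + cI
            - min Cov (ξ * max 0 (τ * (1 + d * e₂) * LU - ded)))
        - (τ * (1 + d * e₁) * LU + cI
            - min Cov (ξ * max 0 (τ * (1 + d * e₁) * LU - ded))) ∧
    (τ * (1 + d * e₂) * LU + cI
          - min Cov (ξ * max 0 (τ * (1 + d * e₂) * LU - ded)))
        - (τ * (1 + d * e₁) * LU + cI
            - min Cov (ξ * max 0 (τ * (1 + d * e₁) * LU - ded)))
      ≤ (τ * (1 + d * e₂) * LU) - (τ * (1 + d * e₁) * LU) := by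
  have hΔ : 0 < τ * d * (e₂ - e₁) := by
    have : (0 : ℝ) < d := by exact_mod_cast hd
    have := sub_pos.2 hlt
    positivity
  have hLU : 0 < LU := pos_of_mul_pos_right (hLP.trans hL) (sub_nonneg.2 hξ1)
  have hcost (L : ℝ) : τ * (1 + d * e₂) * L - τ * (1 + d * e₁) * L = τ * d * (e₂ - e₁) * L := by
    ring
  have hc : τ * (1 + d * e₁) * LU ≤ τ * (1 + d * e₂) * LU := by
    linarith [hcost LU, mul_pos hΔ hLU]
  have hins_mono := insurance_mono (Cov := Cov) (ded := ded) hξ0.le hc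
  have hins_le := insurance_sub_le (Cov := Cov) (ded := ded) hξ0.le hc
  simp only [insurance] at hins_mono hins_le
  refine ⟨?_, ?_, by linarith⟩
  · linarith [hcost LP, mul_pos hΔ hLP]
  · linarith [hcost LP, hcost LU, mul_lt_mul_of_pos_left hL hΔ]

/-- Property P1: if social states have exposures `e₁ < e₂`, then for any
degree `d ≥ 1` the cost differences satisfy
`0 < C_{d,P}(x²) − C_{d,P}(x¹) < C_{d,I}(x²) − C_{d,I}(x¹) ≤ C_{d,N}(x²) − C_{d,N}(x¹)`,
where `C_{d,P} = τ(1 + d·e)L_P + c_P`, `C_{d,N} = τ(1 + d·e)L_U`, and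
`C_{d,I} = C_{d,N} + c_I − min(Cov_max, ξ·max(0, C_{d,N} − ded))`. -/
theorem property_P1 (τ LP LU cP cI ξ ded Cov : ℝ)
    (hτ0 : 0 < τ) (hτ1 : τ ≤ 1)
    (hLP : 0 < LP) (hL : LP < (1 - ξ) * LU)
    (hξ0 : 0 < ξ) (hξ1 : ξ ≤ 1) (hCov : 0 ≤ Cov) (hded : 0 ≤ ded)
    (d : ℕ) (hd : 1 ≤ d)
    (e₁ e₂ : ℝ) (he₁ : 0 ≤ e₁) (hlt : e₁ < e₂) :
    0 < (τ * (1 + d * e₂) * LP + cP) - (τ * (1 + d * e₁) * LP + cP) ∧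
    (τ * (1 + d * e₂) * LP + cP) - (τ * (1 + d * e₁) * LP + cP)
      < (τ * (1 + d * e₂) * LU + cI
            - min Cov (ξ * max 0 (τ * (1 + d * e₂) * LU - ded)))
        - (τ * (1 + d * e₁) * LU + cI
            - min Cov (ξ * max 0 (τ * (1 + d * e₁) * LU - ded))) ∧
    (τ * (1 + d * e₂) * LU + cI
          - min Cov (ξ * max 0 (τ * (1 + d * e₂) * LU - ded)))
        - (τ * (1 + d * e₁) * LU + cI
            - min Cov (ξ * max 0 (τ * (1 + d * e₁) * LU - ded)))
      ≤ (τ * (1 + d * e₂) * LU) - (τ * (1 + d * e₁) * LU) :=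
  property_P1_general τ LP LU cP cI ξ ded Cov hτ0 hLP hL hξ0 hξ1 d hd e₁ e₂ hlt
end

section
/- Degree threshold at the social optimum: let y* minimize the social cost SC(y) = Σ_d [y_d·C_{d,P}(X(y)) + (m_d − y_d)·C_{d,N}(X(y))] over y ∈ Π_d [0, m_d], and let d† = min{d : y*_d > 0}. If d† < D_max, then y*_d = m_d for all d > d†. -/
open Finset

/-- `𝒟 = {1, …, D_max}`. -/
def Dset (Dmax : ℕ) : Finset ℕ := Finset.Icc 1 Dmax

/-- Weighted degree distribution `w_d = d·m_d / ∑ d'·m_{d'}`. -/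
noncomputable def wgt (Dmax : ℕ) (m : ℕ → ℝ) (d : ℕ) : ℝ :=
  (d : ℝ) * m d / ∑ d' ∈ Dset Dmax, (d' : ℝ) * m d'

/-- `γ(y) = β_IA · ∑_d w_d (p_U − (y_d/m_d)·Δp)` where `Δp = p_U − p_P`. -/
noncomputable def gam (Dmax : ℕ) (m : ℕ → ℝ) (pP pU βIA : ℝ) (y : ℕ → ℝ) : ℝ :=
  βIA * ∑ d ∈ Dset Dmax, wgt Dmax m d * (pU - (y d / m d) * (pU - pP))

/-- `λ(y) = β_IA · ∑_d w_d (d−1) (p_U − (y_d/m_d)·Δp)`. -/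
noncomputable def lamb (Dmax : ℕ) (m : ℕ → ℝ) (pP pU βIA : ℝ) (y : ℕ → ℝ) : ℝ :=
  βIA * ∑ d ∈ Dset Dmax, wgt Dmax m d * ((d : ℝ) - 1) * (pU - (y d / m d) * (pU - pP))

/-- Risk exposure `e(y) = γ(y) · ∑_{k=1}^{K} λ(y)^{k−1}`. -/
noncomputable def expo (Dmax : ℕ) (m : ℕ → ℝ) (pP pU βIA : ℝ) (K : ℕ)
    (y : ℕ → ℝ) : ℝ :=
  gam Dmax m pP pU βIA y * ∑ k ∈ Finset.range K, lamb Dmax m pP pU βIA y ^ k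

/-- Social cost
`SC(y) = ∑_d [ y_d·C_{d,P}(X(y)) + (m_d − y_d)·C_{d,N}(X(y)) ]` with
`C_{d,P} = τ(1 + d·e(y))L_P + c_P` and `C_{d,N} = τ(1 + d·e(y))L_U`. -/
noncomputable def SC (Dmax : ℕ) (m : ℕ → ℝ) (pP pU βIA τ LP LU cP : ℝ) (K : ℕ)
    (y : ℕ → ℝ) : ℝ :=
  ∑ d ∈ Dset Dmax,
    (y d * (τ * (1 + (d : ℝ) * expo Dmax m pP pU βIA K y) * LP + cP)
      + (m d - y d) * (τ * (1 + (d : ℝ) * expo Dmax m pP pU βIA K y) * LU))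

/-- Admissible social planner action: `y_d ∈ [0, m_d]` for each `d ∈ 𝒟`. -/
def isPlan (Dmax : ℕ) (m : ℕ → ℝ) (y : ℕ → ℝ) : Prop :=
  ∀ d ∈ Dset Dmax, 0 ≤ y d ∧ y d ≤ m d

/-! Exchange argument: if `y*_{d†} > 0` but `y*_d < m_d` for some `d > d†`, move a mass `ε` of
protection from degree `d†` to degree `d`. Since `w_d ∝ d·m_d`, this lowers both `γ` and `λ`, hence
the exposure. At a fixed exposure `e > 0` the move changes the social cost by
`-ε τ (L_U - L_P) e (d - d†) < 0` (the protection costs `c_P` cancel), and lowering the exposure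
lowers every cost, so the social cost strictly drops, contradicting optimality. -/

section MoveMass

variable {ι : Type*} [DecidableEq ι]

def moveMass (y : ι → ℝ) (a b : ι) (ε : ℝ) : ι → ℝ :=
  Function.update (Function.update y a (y a - ε)) b (y b + ε)

variable {y : ι → ℝ} {a b : ι} {ε : ℝ}

lemma moveMass_apply_left (hab : a ≠ b) : moveMass y a b ε a = y a - ε := by
  simp [moveMass, hab]

lemma moveMass_apply_right : moveMass y a b ε b = y b + ε := by
  simp [moveMass]

lemma moveMass_apply_of_ne {i : ι} (ha : i ≠ a) (hb : i ≠ b) : moveMass y a b ε i = y i := by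
  simp [moveMass, ha, hb]

lemma sum_moveMass {s : Finset ι} (F : ι → ℝ → ℝ) (ha : a ∈ s) (hb : b ∈ s) (hab : a ≠ b) :
    ∑ i ∈ s, F i (moveMass y a b ε i) = ∑ i ∈ s, F i (y i)
      + (F a (y a - ε) - F a (y a)) + (F b (y b + ε) - F b (y b)) := by
  have split (f : ι → ℝ) : ∑ i ∈ s, f i = f a + f b + ∑ i ∈ (s.erase a).erase b, f i := by
    rw [← add_sum_erase s f ha, ← add_sum_erase _ f (mem_erase.2 ⟨hab.symm, hb⟩), add_assoc]
  rw [split, split (fun i => F i (y i)), sum_congr rfl fun i hi => ?_]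
  · rw [moveMass_apply_left hab, moveMass_apply_right]
    ring
  · obtain ⟨hib, hi⟩ := mem_erase.1 hi
    rw [moveMass_apply_of_ne (ne_of_mem_erase hi) hib]

end MoveMass

section Model

variable {Dmax : ℕ} {m : ℕ → ℝ} {pP pU βIA : ℝ} {y : ℕ → ℝ}

def degMass (Dmax : ℕ) (m : ℕ → ℝ) : ℝ :=
  ∑ d ∈ Dset Dmax, (d : ℝ) * m d

lemma wgt_eq (d : ℕ) : wgt Dmax m d = d * m d / degMass Dmax m := rfl

lemma one_le_of_mem_Dset {d : ℕ} (hd : d ∈ Dset Dmax) : (1 : ℝ) ≤ d := by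
  exact_mod_cast (mem_Icc.1 hd).1

lemma degMass_pos (hm : ∀ d ∈ Dset Dmax, 0 < m d) {d : ℕ} (hd : d ∈ Dset Dmax) :
    0 < degMass Dmax m :=
  sum_pos (fun i hi => mul_pos (by linarith [one_le_of_mem_Dset hi]) (hm i hi)) ⟨d, hd⟩

lemma wgt_pos (hm : ∀ d ∈ Dset Dmax, 0 < m d) {d : ℕ} (hd : d ∈ Dset Dmax) :
    0 < wgt Dmax m d :=
  div_pos (mul_pos (by linarith [one_le_of_mem_Dset hd]) (hm d hd)) (degMass_pos hm hd)

lemma le_sub_div_mul_sub {t M : ℝ} (ht : 0 ≤ t ∧ t ≤ M) (hM : 0 < M) (hp : pP ≤ pU) :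
    pP ≤ pU - t / M * (pU - pP) := by
  have : t / M ≤ 1 := (div_le_one hM).2 ht.2
  nlinarith

lemma lt_sub_div_mul_sub {t M : ℝ} (ht : t < M) (hM : 0 < M) (hp : pP < pU) :
    pP < pU - t / M * (pU - pP) := by
  have : t / M < 1 := (div_lt_one hM).2 ht
  nlinarith

lemma gam_nonneg (hm : ∀ d ∈ Dset Dmax, 0 < m d) (hy : isPlan Dmax m y)
    (hpP : 0 ≤ pP) (hp : pP ≤ pU) (hβ : 0 ≤ βIA) : 0 ≤ gam Dmax m pP pU βIA y :=
  mul_nonneg hβ <| sum_nonneg fun i hi => mul_nonneg (wgt_pos hm hi).le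
    (hpP.trans (le_sub_div_mul_sub (hy i hi) (hm i hi) hp))

lemma lamb_nonneg (hm : ∀ d ∈ Dset Dmax, 0 < m d) (hy : isPlan Dmax m y)
    (hpP : 0 ≤ pP) (hp : pP ≤ pU) (hβ : 0 ≤ βIA) : 0 ≤ lamb Dmax m pP pU βIA y :=
  mul_nonneg hβ <| sum_nonneg fun i hi =>
    mul_nonneg (mul_nonneg (wgt_pos hm hi).le (by linarith [one_le_of_mem_Dset hi]))
      (hpP.trans (le_sub_div_mul_sub (hy i hi) (hm i hi) hp))

lemma gam_pos (hm : ∀ d ∈ Dset Dmax, 0 < m d) (hy : isPlan Dmax m y)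
    (hpP : 0 ≤ pP) (hp : pP < pU) (hβ : 0 < βIA) {d : ℕ} (hd : d ∈ Dset Dmax) (hyd : y d < m d) :
    0 < gam Dmax m pP pU βIA y :=
  mul_pos hβ <| sum_pos' (fun i hi => mul_nonneg (wgt_pos hm hi).le
      (hpP.trans (le_sub_div_mul_sub (hy i hi) (hm i hi) hp.le)))
    ⟨d, hd, mul_pos (wgt_pos hm hd) (hpP.trans_lt (lt_sub_div_mul_sub hyd (hm d hd) hp))⟩

lemma expo_pos {K : ℕ} (hK : 1 ≤ K) (hg : 0 < gam Dmax m pP pU βIA y)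
    (hl : 0 ≤ lamb Dmax m pP pU βIA y) : 0 < expo Dmax m pP pU βIA K y :=
  mul_pos hg <| sum_pos' (fun k _ => pow_nonneg hl k) ⟨0, mem_range.2 hK, by simp⟩

lemma expo_le_expo {y' : ℕ → ℝ} (K : ℕ)
    (hg : gam Dmax m pP pU βIA y' ≤ gam Dmax m pP pU βIA y) (hg0 : 0 ≤ gam Dmax m pP pU βIA y)
    (hl : lamb Dmax m pP pU βIA y' ≤ lamb Dmax m pP pU βIA y)
    (hl0 : 0 ≤ lamb Dmax m pP pU βIA y') :
    expo Dmax m pP pU βIA K y' ≤ expo Dmax m pP pU βIA K y :=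
  mul_le_mul hg (sum_le_sum fun k _ => pow_le_pow_left₀ hl0 hl k)
    (sum_nonneg fun k _ => pow_nonneg hl0 k) hg0

variable {a b : ℕ} {ε : ℝ}

lemma isPlan_moveMass (hy : isPlan Dmax m y) (hab : a ≠ b) (hε : 0 ≤ ε) (hεa : ε ≤ y a)
    (hεb : ε ≤ m b - y b) : isPlan Dmax m (moveMass y a b ε) := by
  intro i hi
  obtain ⟨hy0, hym⟩ := hy i hi
  by_cases hib : i = b
  · subst hib
    rw [moveMass_apply_right]
    constructor <;> linarith
  by_cases hia : i = a
  · subst hia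
    rw [moveMass_apply_left hab]
    constructor <;> linarith
  rw [moveMass_apply_of_ne hia hib]
  exact ⟨hy0, hym⟩

lemma gam_moveMass (hm : ∀ d ∈ Dset Dmax, 0 < m d) (ha : a ∈ Dset Dmax) (hb : b ∈ Dset Dmax)
    (hab : a ≠ b) :
    gam Dmax m pP pU βIA (moveMass y a b ε) =
      gam Dmax m pP pU βIA y - βIA * (pU - pP) * ε * (b - a) / degMass Dmax m := by
  have := (hm a ha).ne'
  have := (hm b hb).ne'
  have := (degMass_pos hm ha).ne'
  rw [gam, gam, sum_moveMass (fun i t => wgt Dmax m i * (pU - t / m i * (pU - pP))) ha hb hab]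
  generalize (∑ i ∈ Dset Dmax, _ : ℝ) = S
  rw [wgt_eq, wgt_eq]
  field_simp
  ring

lemma lamb_moveMass (hm : ∀ d ∈ Dset Dmax, 0 < m d) (ha : a ∈ Dset Dmax) (hb : b ∈ Dset Dmax)
    (hab : a ≠ b) :
    lamb Dmax m pP pU βIA (moveMass y a b ε) =
      lamb Dmax m pP pU βIA y
        - βIA * (pU - pP) * ε * (b * (b - 1) - a * (a - 1)) / degMass Dmax m := by
  have := (hm a ha).ne'
  have := (hm b hb).ne'
  have := (degMass_pos hm ha).ne'
  rw [lamb, lamb,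
    sum_moveMass (fun i t => wgt Dmax m i * ((i : ℝ) - 1) * (pU - t / m i * (pU - pP))) ha hb hab]
  generalize (∑ i ∈ Dset Dmax, _ : ℝ) = S
  rw [wgt_eq, wgt_eq]
  field_simp
  ring

lemma expo_moveMass_le (hm : ∀ d ∈ Dset Dmax, 0 < m d) (hy : isPlan Dmax m y)
    (hy' : isPlan Dmax m (moveMass y a b ε)) (hpP : 0 ≤ pP) (hp : pP ≤ pU) (hβ : 0 ≤ βIA)
    (ha : a ∈ Dset Dmax) (hb : b ∈ Dset Dmax) (hab : a < b) (hε : 0 ≤ ε) (K : ℕ) :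
    expo Dmax m pP pU βIA K (moveMass y a b ε) ≤ expo Dmax m pP pU βIA K y := by
  have hS := (degMass_pos hm ha).le
  have hba : (a : ℝ) < b := by exact_mod_cast hab
  refine expo_le_expo K ?_ (gam_nonneg hm hy hpP hp hβ) ?_ (lamb_nonneg hm hy' hpP hp hβ)
  · rw [gam_moveMass hm ha hb hab.ne, sub_le_self_iff]
    have : 0 ≤ pU - pP := sub_nonneg.2 hp
    have : 0 ≤ (b : ℝ) - a := by linarith
    positivity
  · rw [lamb_moveMass hm ha hb hab.ne, sub_le_self_iff]
    have : 0 ≤ pU - pP := sub_nonneg.2 hp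
    have : 0 ≤ (b : ℝ) * (b - 1) - a * (a - 1) := by nlinarith [one_le_of_mem_Dset ha]
    positivity

end Model

section Cost

variable {Dmax : ℕ} {m : ℕ → ℝ} {τ LP LU cP e : ℝ} {y : ℕ → ℝ}

def costAt (Dmax : ℕ) (m : ℕ → ℝ) (τ LP LU cP e : ℝ) (y : ℕ → ℝ) : ℝ :=
  ∑ d ∈ Dset Dmax,
    (y d * (τ * (1 + (d : ℝ) * e) * LP + cP) + (m d - y d) * (τ * (1 + (d : ℝ) * e) * LU))

lemma SC_eq_costAt (pP pU βIA : ℝ) (K : ℕ) :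
    SC Dmax m pP pU βIA τ LP LU cP K y =
      costAt Dmax m τ LP LU cP (expo Dmax m pP pU βIA K y) y := rfl

lemma costAt_mono (hy : isPlan Dmax m y) (hτ : 0 ≤ τ) (hLP : 0 ≤ LP) (hL : LP ≤ LU) :
    Monotone fun e => costAt Dmax m τ LP LU cP e y := by
  intro e e' he
  refine sum_le_sum fun d hd => ?_
  obtain ⟨hy0, hym⟩ := hy d hd
  have : 0 ≤ τ * d * (e' - e) * (y d * LP + (m d - y d) * LU) := by
    have : 0 ≤ m d - y d := sub_nonneg.2 hym
    have : 0 ≤ e' - e := sub_nonneg.2 he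
    have : 0 ≤ LU := hLP.trans hL
    positivity
  linarith

variable {a b : ℕ} {ε : ℝ}

lemma costAt_moveMass (ha : a ∈ Dset Dmax) (hb : b ∈ Dset Dmax) (hab : a ≠ b) :
    costAt Dmax m τ LP LU cP e (moveMass y a b ε) =
      costAt Dmax m τ LP LU cP e y - ε * τ * (LU - LP) * e * (b - a) := by
  rw [costAt, costAt, sum_moveMass (fun (i : ℕ) t =>
    t * (τ * (1 + (i : ℝ) * e) * LP + cP) + (m i - t) * (τ * (1 + (i : ℝ) * e) * LU)) ha hb hab]
  ring

end Cost

theorem social_opt_degree_threshold_general (Dmax : ℕ)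
    (m : ℕ → ℝ) (hm : ∀ d ∈ Dset Dmax, 0 < m d)
    (pP pU βIA τ LP LU cP : ℝ) (K : ℕ)
    (hpP : 0 ≤ pP) (hp : pP < pU)
    (hβ0 : 0 < βIA) (hK : 1 ≤ K)
    (hτ0 : 0 < τ) (hLP : 0 < LP) (hL : LP < LU)
    (ystar : ℕ → ℝ) (hplan : isPlan Dmax m ystar)
    (hmin : ∀ y : ℕ → ℝ, isPlan Dmax m y →
      SC Dmax m pP pU βIA τ LP LU cP K ystar ≤ SC Dmax m pP pU βIA τ LP LU cP K y)
    (ddag : ℕ) (hdin : ddag ∈ Dset Dmax) (hdpos : 0 < ystar ddag) :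
    ∀ d ∈ Dset Dmax, ddag < d → ystar d = m d := by
  intro d hd hdd
  by_contra hne
  have hlt : ystar d < m d := lt_of_le_of_ne (hplan d hd).2 hne
  set ε := min (ystar ddag) (m d - ystar d)
  have hε : 0 < ε := lt_min hdpos (sub_pos.2 hlt)
  set y' := moveMass ystar ddag d ε
  have hplan' : isPlan Dmax m y' :=
    isPlan_moveMass hplan hdd.ne hε.le (min_le_left _ _) (min_le_right _ _)
  have hy'ddag : y' ddag < m ddag := by
    have : y' ddag = ystar ddag - ε := moveMass_apply_left hdd.ne
    linarith [(hplan ddag hdin).2]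
  set e' := expo Dmax m pP pU βIA K y'
  have he'_pos : 0 < e' := expo_pos hK (gam_pos hm hplan' hpP hp hβ0 hdin hy'ddag)
    (lamb_nonneg hm hplan' hpP hp.le hβ0.le)
  have he'_le : e' ≤ expo Dmax m pP pU βIA K ystar :=
    expo_moveMass_le hm hplan hplan' hpP hp.le hβ0.le hdin hd hdd hε.le K
  have hgain : 0 < ε * τ * (LU - LP) * e' * (d - ddag) := by
    have : 0 < (d : ℝ) - ddag := sub_pos.2 (by exact_mod_cast hdd)
    have := sub_pos.2 hL
    positivity
  have hcost := hmin y' hplan'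
  rw [SC_eq_costAt, SC_eq_costAt, costAt_moveMass hdin hd hdd.ne] at hcost
  linarith [costAt_mono (cP := cP) hplan hτ0.le hLP.le hL.le he'_le]

/-- degree threshold at the social optimum. If `y*` minimizes the
social cost and `d†` is the smallest degree with `y*_{d†} > 0`, with `d† < D_max`,
then `y*_d = m_d` for all `d > d†`. -/
theorem social_opt_degree_threshold (Dmax : ℕ) (hD : 1 ≤ Dmax)
    (m : ℕ → ℝ) (hm : ∀ d ∈ Dset Dmax, 0 < m d)
    (pP pU βIA τ LP LU cP : ℝ) (K : ℕ)
    (hpP : 0 ≤ pP) (hp : pP < pU) (hpU : pU ≤ 1)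
    (hβ0 : 0 < βIA) (hβ1 : βIA ≤ 1) (hK : 1 ≤ K)
    (hτ0 : 0 < τ) (hτ1 : τ ≤ 1) (hLP : 0 < LP) (hL : LP < LU) (hcP : 0 < cP)
    (ystar : ℕ → ℝ) (hplan : isPlan Dmax m ystar)
    (hmin : ∀ y : ℕ → ℝ, isPlan Dmax m y →
      SC Dmax m pP pU βIA τ LP LU cP K ystar ≤ SC Dmax m pP pU βIA τ LP LU cP K y)
    (ddag : ℕ) (hdin : ddag ∈ Dset Dmax) (hdpos : 0 < ystar ddag)
    (hdmin : ∀ d ∈ Dset Dmax, d < ddag → ystar d = 0)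
    (hdlt : ddag < Dmax) :
    ∀ d ∈ Dset Dmax, ddag < d → ystar d = m d :=
  social_opt_degree_threshold_general Dmax m hm pP pU βIA τ LP LU cP K hpP hp hβ0 hK hτ0 hLP hL
    ystar hplan hmin ddag hdin hdpos
end

section
/- Uniqueness of the social optimum: the social cost SC(y) = Σ_d [y_d·C_{d,P}(X(y)) + (m_d − y_d)·C_{d,N}(X(y))] has a unique minimizer over y ∈ Π_{d ∈ 𝒟} [0, m_d]. -/
open Finset

/- ## Auxiliary machinery -/

private noncomputable def Gq (M1 pP pU βIA τ LP LU x : ℝ) : ℝ :=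
  (τ * (LU * M1 - (LU - LP) * x)) * (βIA * ((pU * M1 - (pU - pP) * x) / M1))

private noncomputable def Hq (M1 C pP pU βIA : ℝ) (K : ℕ) (x : ℝ) : ℝ :=
  ∑ k ∈ Finset.range K, (βIA * ((pU * C - (pU - pP) * x) / M1)) ^ k

private noncomputable def slD (Dmax : ℕ) (y : ℕ → ℝ) : ℝ := ∑ d ∈ Dset Dmax, y d
private noncomputable def tlD (Dmax : ℕ) (y : ℕ → ℝ) : ℝ :=
  ∑ d ∈ Dset Dmax, (d : ℝ) * y d
private noncomputable def ulD (Dmax : ℕ) (y : ℕ → ℝ) : ℝ :=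
  ∑ d ∈ Dset Dmax, (d : ℝ) * ((d : ℝ) - 1) * y d
private noncomputable def M1v (Dmax : ℕ) (m : ℕ → ℝ) : ℝ := tlD Dmax m
private noncomputable def Cv (Dmax : ℕ) (m : ℕ → ℝ) : ℝ := ulD Dmax m

private lemma mid_pow_le (a b : ℝ) (ha : 0 ≤ a) (hb : 0 ≤ b) (k : ℕ) :
    ((a + b) / 2) ^ k ≤ (a ^ k + b ^ k) / 2 := by
  have h := (convexOn_pow k).2 (Set.mem_Ici.2 ha) (Set.mem_Ici.2 hb)
    (by norm_num : (0:ℝ) ≤ 1/2) (by norm_num : (0:ℝ) ≤ 1/2) (by norm_num)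
  have e1 : (1/2 : ℝ) • a + (1/2 : ℝ) • b = (a + b)/2 := by
    simp [smul_eq_mul]; ring
  rw [e1] at h
  simp only [smul_eq_mul] at h
  linarith

private lemma Gq_nonneg {M1 pP pU βIA τ LP LU x : ℝ}
    (hM1 : 0 < M1) (hpP : 0 ≤ pP) (hp : pP < pU) (hβ : 0 < βIA) (hτ : 0 < τ)
    (hLP : 0 < LP) (hL : LP < LU) (hx : x ≤ M1) :
    0 ≤ Gq M1 pP pU βIA τ LP LU x := by
  have hP : 0 ≤ pU * M1 - (pU - pP) * x := by
    nlinarith [mul_nonneg (sub_nonneg.2 hp.le) (sub_nonneg.2 hx), mul_nonneg hpP hM1.le]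
  have hB : 0 ≤ LU * M1 - (LU - LP) * x := by
    nlinarith [mul_pos hLP hM1, mul_nonneg (sub_nonneg.2 hL.le) (sub_nonneg.2 hx)]
  exact mul_nonneg (mul_nonneg hτ.le hB) (mul_nonneg hβ.le (div_nonneg hP hM1.le))

private lemma Gq_strict {M1 pP pU βIA τ LP LU x x' : ℝ}
    (hM1 : 0 < M1) (hpP : 0 ≤ pP) (hp : pP < pU) (hβ : 0 < βIA) (hτ : 0 < τ)
    (hLP : 0 < LP) (hL : LP < LU) (hxx : x < x') (hx' : x' ≤ M1) :
    Gq M1 pP pU βIA τ LP LU x' < Gq M1 pP pU βIA τ LP LU x := by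
  have e : ∀ z : ℝ, Gq M1 pP pU βIA τ LP LU z
      = τ * βIA / M1 * ((LU * M1 - (LU - LP) * z) * (pU * M1 - (pU - pP) * z)) := by
    intro z; unfold Gq; ring
  have hPx' : 0 ≤ pU * M1 - (pU - pP) * x' := by
    nlinarith [mul_nonneg (sub_nonneg.2 hp.le) (sub_nonneg.2 hx'), mul_nonneg hpP hM1.le]
  have hBx' : 0 < LU * M1 - (LU - LP) * x' := by
    nlinarith [mul_pos hLP hM1, mul_nonneg (sub_nonneg.2 hL.le) (sub_nonneg.2 hx')]
  have hPlt : pU * M1 - (pU - pP) * x' < pU * M1 - (pU - pP) * x := by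
    nlinarith [mul_pos (sub_pos.2 hp) (sub_pos.2 hxx)]
  have hBlt : LU * M1 - (LU - LP) * x' < LU * M1 - (LU - LP) * x := by
    nlinarith [mul_pos (sub_pos.2 hL) (sub_pos.2 hxx)]
  have key : (LU * M1 - (LU - LP) * x') * (pU * M1 - (pU - pP) * x')
      < (LU * M1 - (LU - LP) * x) * (pU * M1 - (pU - pP) * x) := by
    nlinarith [mul_pos hBx' (sub_pos.2 hPlt), mul_nonneg hPx' (sub_pos.2 hBlt).le]
  rw [e, e]
  exact mul_lt_mul_of_pos_left key (by positivity)

private lemma Gq_mid {M1 pP pU βIA τ LP LU x x' : ℝ} (hM1ne : M1 ≠ 0) :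
    Gq M1 pP pU βIA τ LP LU ((x + x') / 2)
      = (Gq M1 pP pU βIA τ LP LU x + Gq M1 pP pU βIA τ LP LU x') / 2
        - τ * βIA * (pU - pP) * (LU - LP) * (x' - x) ^ 2 / (4 * M1) := by
  unfold Gq; field_simp; ring

private lemma lam_nonneg {M1 C pP pU βIA x : ℝ}
    (hM1 : 0 < M1) (hC : 0 ≤ C) (hpP : 0 ≤ pP) (hp : pP < pU) (hβ : 0 < βIA)
    (hx : x ≤ C) : 0 ≤ βIA * ((pU * C - (pU - pP) * x) / M1) := by
  have h : 0 ≤ pU * C - (pU - pP) * x := by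
    nlinarith [mul_nonneg (sub_nonneg.2 hp.le) (sub_nonneg.2 hx), mul_nonneg hpP hC]
  exact mul_nonneg hβ.le (div_nonneg h hM1.le)

private lemma lam_anti {M1 C pP pU βIA x x' : ℝ}
    (hM1 : 0 < M1) (hp : pP < pU) (hβ : 0 < βIA) (hxx : x ≤ x') :
    βIA * ((pU * C - (pU - pP) * x') / M1) ≤ βIA * ((pU * C - (pU - pP) * x) / M1) := by
  have h1 : pU * C - (pU - pP) * x' ≤ pU * C - (pU - pP) * x := by
    nlinarith [mul_nonneg (sub_pos.2 hp).le (sub_nonneg.2 hxx)]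
  exact mul_le_mul_of_nonneg_left ((div_le_div_iff_of_pos_right hM1).2 h1) hβ.le

private lemma Hq_one_le {M1 C pP pU βIA x : ℝ} {K : ℕ}
    (hM1 : 0 < M1) (hC : 0 ≤ C) (hpP : 0 ≤ pP) (hp : pP < pU) (hβ : 0 < βIA)
    (hKK : 1 ≤ K) (hx : x ≤ C) : 1 ≤ Hq M1 C pP pU βIA K x := by
  have h0 : (0:ℕ) ∈ Finset.range K := Finset.mem_range.2 hKK
  have h := Finset.single_le_sum
    (f := fun k => (βIA * ((pU * C - (pU - pP) * x) / M1)) ^ k)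
    (fun k _ => pow_nonneg (lam_nonneg hM1 hC hpP hp hβ hx) k) h0
  simpa [Hq] using h

private lemma Hq_nonneg {M1 C pP pU βIA x : ℝ} {K : ℕ}
    (hM1 : 0 < M1) (hC : 0 ≤ C) (hpP : 0 ≤ pP) (hp : pP < pU) (hβ : 0 < βIA)
    (hx : x ≤ C) : 0 ≤ Hq M1 C pP pU βIA K x :=
  Finset.sum_nonneg fun k _ => pow_nonneg (lam_nonneg hM1 hC hpP hp hβ hx) k

private lemma Hq_anti {M1 C pP pU βIA x x' : ℝ} {K : ℕ}
    (hM1 : 0 < M1) (hC : 0 ≤ C) (hpP : 0 ≤ pP) (hp : pP < pU) (hβ : 0 < βIA)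
    (hxx : x ≤ x') (hx' : x' ≤ C) :
    Hq M1 C pP pU βIA K x' ≤ Hq M1 C pP pU βIA K x := by
  apply Finset.sum_le_sum
  intro k _
  exact pow_le_pow_left₀ (lam_nonneg hM1 hC hpP hp hβ hx')
    (lam_anti hM1 hp hβ hxx) k

private lemma Hq_mid {M1 C pP pU βIA x x' : ℝ} {K : ℕ}
    (hM1 : 0 < M1) (hC : 0 ≤ C) (hpP : 0 ≤ pP) (hp : pP < pU) (hβ : 0 < βIA)
    (hx : x ≤ C) (hx' : x' ≤ C) :
    Hq M1 C pP pU βIA K ((x + x') / 2)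
      ≤ (Hq M1 C pP pU βIA K x + Hq M1 C pP pU βIA K x') / 2 := by
  have hl : βIA * ((pU * C - (pU - pP) * ((x + x') / 2)) / M1)
      = (βIA * ((pU * C - (pU - pP) * x) / M1)
          + βIA * ((pU * C - (pU - pP) * x') / M1)) / 2 := by
    field_simp; ring
  unfold Hq
  rw [hl]
  calc ∑ k ∈ Finset.range K,
        ((βIA * ((pU * C - (pU - pP) * x) / M1)
          + βIA * ((pU * C - (pU - pP) * x') / M1)) / 2) ^ k
      ≤ ∑ k ∈ Finset.range K,
        ((βIA * ((pU * C - (pU - pP) * x) / M1)) ^ k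
          + (βIA * ((pU * C - (pU - pP) * x') / M1)) ^ k) / 2 := by
        apply Finset.sum_le_sum
        intro k _
        exact mid_pow_le _ _ (lam_nonneg hM1 hC hpP hp hβ hx)
          (lam_nonneg hM1 hC hpP hp hβ hx') k
    _ = _ := by rw [← Finset.sum_div, Finset.sum_add_distrib]

private lemma one_le_cast {Dmax d : ℕ} (hd : d ∈ Dset Dmax) : (1:ℝ) ≤ (d:ℝ) := by
  have := (Finset.mem_Icc.1 hd).1
  exact_mod_cast this

private lemma sum_mul_update (s : Finset ℕ) (c y : ℕ → ℝ) (i : ℕ) (hi : i ∈ s) (v : ℝ) :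
    ∑ d ∈ s, c d * Function.update y i v d
      = (∑ d ∈ s, c d * y d) + c i * (v - y i) := by
  classical
  have h : (fun d => c d * Function.update y i v d)
      = Function.update (fun d => c d * y d) i (c i * v) := by
    funext d
    rcases eq_or_ne d i with h | h
    · subst h; simp
    · simp [Function.update_of_ne h]
  rw [h, Finset.sum_update_of_mem hi,
    Finset.sum_eq_sum_sdiff_singleton_add hi (fun d => c d * y d)]
  ring

private lemma slD_update (Dmax : ℕ) (y : ℕ → ℝ) {i : ℕ} (hi : i ∈ Dset Dmax) (v : ℝ) :
    slD Dmax (Function.update y i v) = slD Dmax y + (v - y i) := by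
  have h := sum_mul_update (Dset Dmax) (fun _ => (1:ℝ)) y i hi v
  simpa [slD] using h

private lemma tlD_update (Dmax : ℕ) (y : ℕ → ℝ) {i : ℕ} (hi : i ∈ Dset Dmax) (v : ℝ) :
    tlD Dmax (Function.update y i v) = tlD Dmax y + (i:ℝ) * (v - y i) :=
  sum_mul_update (Dset Dmax) (fun d => (d:ℝ)) y i hi v

private lemma ulD_update (Dmax : ℕ) (y : ℕ → ℝ) {i : ℕ} (hi : i ∈ Dset Dmax) (v : ℝ) :
    ulD Dmax (Function.update y i v) = ulD Dmax y + (i:ℝ) * ((i:ℝ) - 1) * (v - y i) :=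
  sum_mul_update (Dset Dmax) (fun d => (d:ℝ) * ((d:ℝ) - 1)) y i hi v

private lemma tlD_le {Dmax : ℕ} {m y : ℕ → ℝ} (hp : isPlan Dmax m y) :
    tlD Dmax y ≤ M1v Dmax m := by
  apply Finset.sum_le_sum
  intro d hd
  exact mul_le_mul_of_nonneg_left (hp d hd).2 (by positivity)

private lemma ulD_le {Dmax : ℕ} {m y : ℕ → ℝ} (hp : isPlan Dmax m y) :
    ulD Dmax y ≤ Cv Dmax m := by
  apply Finset.sum_le_sum
  intro d hd
  have h1 := one_le_cast hd
  exact mul_le_mul_of_nonneg_left (hp d hd).2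
    (mul_nonneg (by linarith) (by linarith))

private lemma M1v_pos {Dmax : ℕ} (hD : 1 ≤ Dmax) {m : ℕ → ℝ}
    (hm : ∀ d ∈ Dset Dmax, 0 < m d) : 0 < M1v Dmax m := by
  unfold M1v tlD
  apply Finset.sum_pos
  · intro d hd
    exact mul_pos (lt_of_lt_of_le one_pos (one_le_cast hd)) (hm d hd)
  · exact ⟨1, Finset.mem_Icc.2 ⟨le_rfl, hD⟩⟩

private lemma Cv_nonneg {Dmax : ℕ} {m : ℕ → ℝ}
    (hm : ∀ d ∈ Dset Dmax, 0 < m d) : 0 ≤ Cv Dmax m := by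
  unfold Cv ulD
  apply Finset.sum_nonneg
  intro d hd
  have h1 := one_le_cast hd
  exact mul_nonneg (mul_nonneg (by linarith) (by linarith)) (hm d hd).le

private lemma gam_eq (Dmax : ℕ) (m : ℕ → ℝ) (hm : ∀ d ∈ Dset Dmax, 0 < m d)
    (hM1 : (∑ d ∈ Dset Dmax, (d:ℝ) * m d) ≠ 0) (pP pU βIA : ℝ) (y : ℕ → ℝ) :
    gam Dmax m pP pU βIA y
      = βIA * ((pU * (∑ d ∈ Dset Dmax, (d:ℝ) * m d)
          - (pU - pP) * (∑ d ∈ Dset Dmax, (d:ℝ) * y d))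
            / (∑ d ∈ Dset Dmax, (d:ℝ) * m d)) := by
  unfold gam wgt
  rw [Finset.sum_congr rfl (fun (d : ℕ) (hd : d ∈ Dset Dmax) => show
      ((d:ℝ) * m d / (∑ d' ∈ Dset Dmax, (d':ℝ) * m d')) * (pU - (y d / m d) * (pU - pP))
        = ((d:ℝ) * m d * pU - (pU - pP) * ((d:ℝ) * y d)) / (∑ d' ∈ Dset Dmax, (d':ℝ) * m d')
      from by
        have hmd := (hm d hd).ne'
        field_simp)]
  rw [← Finset.sum_div, Finset.sum_sub_distrib, ← Finset.sum_mul, ← Finset.mul_sum]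
  ring

private lemma lamb_eq (Dmax : ℕ) (m : ℕ → ℝ) (hm : ∀ d ∈ Dset Dmax, 0 < m d)
    (hM1 : (∑ d ∈ Dset Dmax, (d:ℝ) * m d) ≠ 0) (pP pU βIA : ℝ) (y : ℕ → ℝ) :
    lamb Dmax m pP pU βIA y
      = βIA * ((pU * (∑ d ∈ Dset Dmax, (d:ℝ) * ((d:ℝ) - 1) * m d)
          - (pU - pP) * (∑ d ∈ Dset Dmax, (d:ℝ) * ((d:ℝ) - 1) * y d))
            / (∑ d ∈ Dset Dmax, (d:ℝ) * m d)) := by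
  unfold lamb wgt
  rw [Finset.sum_congr rfl (fun (d : ℕ) (hd : d ∈ Dset Dmax) => show
      ((d:ℝ) * m d / (∑ d' ∈ Dset Dmax, (d':ℝ) * m d')) * ((d:ℝ) - 1) * (pU - (y d / m d) * (pU - pP))
        = ((d:ℝ) * ((d:ℝ) - 1) * m d * pU - (pU - pP) * ((d:ℝ) * ((d:ℝ) - 1) * y d))
            / (∑ d' ∈ Dset Dmax, (d':ℝ) * m d')
      from by
        have hmd := (hm d hd).ne'
        field_simp)]
  rw [← Finset.sum_div, Finset.sum_sub_distrib, ← Finset.sum_mul, ← Finset.mul_sum]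
  ring

private lemma SC_lin (Dmax : ℕ) (m : ℕ → ℝ) (pP pU βIA τ LP LU cP : ℝ) (K : ℕ)
    (y : ℕ → ℝ) :
    SC Dmax m pP pU βIA τ LP LU cP K y
      = τ * LU * (∑ d ∈ Dset Dmax, m d)
        + (cP - τ * (LU - LP)) * (∑ d ∈ Dset Dmax, y d)
        + (τ * (LU * (∑ d ∈ Dset Dmax, (d:ℝ) * m d)
            - (LU - LP) * (∑ d ∈ Dset Dmax, (d:ℝ) * y d)))
          * expo Dmax m pP pU βIA K y := by
  unfold SC
  set E := expo Dmax m pP pU βIA K y with hE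
  rw [Finset.sum_congr rfl (fun (d : ℕ) _ => show
      (y d * (τ * (1 + (d : ℝ) * E) * LP + cP) + (m d - y d) * (τ * (1 + (d : ℝ) * E) * LU))
        = τ * LU * m d + (cP - τ * (LU - LP)) * y d
            + (τ * (LU * ((d:ℝ) * m d) - (LU - LP) * ((d:ℝ) * y d))) * E
      from by ring)]
  rw [Finset.sum_add_distrib, Finset.sum_add_distrib, ← Finset.mul_sum, ← Finset.mul_sum,
    ← Finset.sum_mul]
  congr 1
  rw [Finset.sum_congr rfl (fun (d : ℕ) _ => show
      τ * (LU * ((d:ℝ) * m d) - (LU - LP) * ((d:ℝ) * y d))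
        = τ * (LU * ((d:ℝ) * m d)) - τ * ((LU - LP) * ((d:ℝ) * y d)) from by ring),
    Finset.sum_sub_distrib, ← Finset.mul_sum, ← Finset.mul_sum, ← Finset.mul_sum, ← Finset.mul_sum]
  ring

private lemma SC_repr (Dmax : ℕ) (m : ℕ → ℝ) (hm : ∀ d ∈ Dset Dmax, 0 < m d)
    (hM1 : M1v Dmax m ≠ 0) (pP pU βIA τ LP LU cP : ℝ) (K : ℕ) (y : ℕ → ℝ) :
    SC Dmax m pP pU βIA τ LP LU cP K y
      = τ * LU * (∑ d ∈ Dset Dmax, m d)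
        + (cP - τ * (LU - LP)) * slD Dmax y
        + Gq (M1v Dmax m) pP pU βIA τ LP LU (tlD Dmax y)
          * Hq (M1v Dmax m) (Cv Dmax m) pP pU βIA K (ulD Dmax y) := by
  have hM1' : (∑ d ∈ Dset Dmax, (d:ℝ) * m d) ≠ 0 := hM1
  rw [SC_lin, expo, gam_eq Dmax m hm hM1' pP pU βIA y, lamb_eq Dmax m hm hM1' pP pU βIA y]
  simp only [Gq, Hq, slD, tlD, ulD, M1v, Cv]
  ring

private noncomputable def extend (Dmax : ℕ) (z : {d // d ∈ Dset Dmax} → ℝ) : ℕ → ℝ :=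
  fun n => if h : n ∈ Dset Dmax then z ⟨n, h⟩ else 0

private lemma sum_mul_extend (Dmax : ℕ) (c : ℕ → ℝ) (z : {d // d ∈ Dset Dmax} → ℝ) :
    (∑ d ∈ Dset Dmax, c d * extend Dmax z d)
      = ∑ d ∈ (Dset Dmax).attach, c d.1 * z d := by
  rw [← Finset.sum_attach (Dset Dmax) (fun d => c d * extend Dmax z d)]
  refine Finset.sum_congr rfl fun d _ => ?_
  unfold extend
  rw [dif_pos d.2]

set_option maxHeartbeats 1600000 in
/-- the social cost has a unique minimizer over `Π_{d ∈ 𝒟} [0, m_d]`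
(existence, and any two minimizers agree on `𝒟`). -/
theorem social_opt_unique (Dmax : ℕ) (hD : 1 ≤ Dmax)
    (m : ℕ → ℝ) (hm : ∀ d ∈ Dset Dmax, 0 < m d)
    (pP pU βIA τ LP LU cP : ℝ) (K : ℕ)
    (hpP : 0 ≤ pP) (hp : pP < pU) (hpU : pU ≤ 1)
    (hβ0 : 0 < βIA) (hβ1 : βIA ≤ 1) (hK : 1 ≤ K)
    (hτ0 : 0 < τ) (hτ1 : τ ≤ 1) (hLP : 0 < LP) (hL : LP < LU) (hcP : 0 < cP) :
    (∃ y : ℕ → ℝ, isPlan Dmax m y ∧ ∀ y' : ℕ → ℝ, isPlan Dmax m y' →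
        SC Dmax m pP pU βIA τ LP LU cP K y ≤ SC Dmax m pP pU βIA τ LP LU cP K y') ∧
    (∀ y₁ y₂ : ℕ → ℝ,
      (isPlan Dmax m y₁ ∧ ∀ y' : ℕ → ℝ, isPlan Dmax m y' →
        SC Dmax m pP pU βIA τ LP LU cP K y₁ ≤ SC Dmax m pP pU βIA τ LP LU cP K y') →
      (isPlan Dmax m y₂ ∧ ∀ y' : ℕ → ℝ, isPlan Dmax m y' →
        SC Dmax m pP pU βIA τ LP LU cP K y₂ ≤ SC Dmax m pP pU βIA τ LP LU cP K y') →
      ∀ d ∈ Dset Dmax, y₁ d = y₂ d) := by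
  classical
  have hM1 : 0 < M1v Dmax m := M1v_pos hD hm
  have hM1ne : M1v Dmax m ≠ 0 := hM1.ne'
  have hCnn : 0 ≤ Cv Dmax m := Cv_nonneg hm
  have hrepr : ∀ y, SC Dmax m pP pU βIA τ LP LU cP K y
      = τ * LU * (∑ d ∈ Dset Dmax, m d)
        + (cP - τ * (LU - LP)) * slD Dmax y
        + Gq (M1v Dmax m) pP pU βIA τ LP LU (tlD Dmax y)
          * Hq (M1v Dmax m) (Cv Dmax m) pP pU βIA K (ulD Dmax y) :=
    fun y => SC_repr Dmax m hm hM1ne pP pU βIA τ LP LU cP K y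
  constructor
  · -- EXISTENCE
    have hs : ∀ z, slD Dmax (extend Dmax z) = ∑ d ∈ (Dset Dmax).attach, z d := by
      intro z
      have h := sum_mul_extend Dmax (fun _ => (1:ℝ)) z
      simpa [slD] using h
    have ht : ∀ z, tlD Dmax (extend Dmax z)
        = ∑ d ∈ (Dset Dmax).attach, (d.1:ℝ) * z d :=
      fun z => sum_mul_extend Dmax (fun d => (d:ℝ)) z
    have hu : ∀ z, ulD Dmax (extend Dmax z)
        = ∑ d ∈ (Dset Dmax).attach, (d.1:ℝ) * ((d.1:ℝ) - 1) * z d :=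
      fun z => sum_mul_extend Dmax (fun d => (d:ℝ) * ((d:ℝ) - 1)) z
    have hcont : Continuous
        (fun z : {d // d ∈ Dset Dmax} → ℝ => SC Dmax m pP pU βIA τ LP LU cP K (extend Dmax z)) := by
      have he : (fun z : {d // d ∈ Dset Dmax} → ℝ =>
            SC Dmax m pP pU βIA τ LP LU cP K (extend Dmax z))
          = fun z => τ * LU * (∑ d ∈ Dset Dmax, m d)
            + (cP - τ * (LU - LP)) * (∑ d ∈ (Dset Dmax).attach, z d)
            + Gq (M1v Dmax m) pP pU βIA τ LP LU
                (∑ d ∈ (Dset Dmax).attach, (d.1:ℝ) * z d)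
              * Hq (M1v Dmax m) (Cv Dmax m) pP pU βIA K
                (∑ d ∈ (Dset Dmax).attach, (d.1:ℝ) * ((d.1:ℝ) - 1) * z d) := by
        funext z
        rw [hrepr, hs, ht, hu]
      rw [he]
      have c1 : Continuous (fun z : {d // d ∈ Dset Dmax} → ℝ =>
          ∑ d ∈ (Dset Dmax).attach, z d) :=
        continuous_finset_sum _ fun d _ => continuous_apply d
      have c2 : Continuous (fun z : {d // d ∈ Dset Dmax} → ℝ =>
          ∑ d ∈ (Dset Dmax).attach, (d.1:ℝ) * z d) :=
        continuous_finset_sum _ fun d _ => continuous_const.mul (continuous_apply d)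
      have c3 : Continuous (fun z : {d // d ∈ Dset Dmax} → ℝ =>
          ∑ d ∈ (Dset Dmax).attach, (d.1:ℝ) * ((d.1:ℝ) - 1) * z d) :=
        continuous_finset_sum _ fun d _ => continuous_const.mul (continuous_apply d)
      have cG : Continuous (Gq (M1v Dmax m) pP pU βIA τ LP LU) := by
        unfold Gq
        simp only [div_eq_mul_inv]
        fun_prop
      have cH : Continuous (Hq (M1v Dmax m) (Cv Dmax m) pP pU βIA K) := by
        unfold Hq
        apply continuous_finset_sum
        intro k _
        simp only [div_eq_mul_inv]
        fun_prop
      exact (continuous_const.add (continuous_const.mul c1)).add ((cG.comp c2).mul (cH.comp c3))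
    have hcpt : IsCompact (Set.univ.pi fun d : {d // d ∈ Dset Dmax} => Set.Icc (0:ℝ) (m d.1)) :=
      isCompact_univ_pi fun d => isCompact_Icc
    have hbne : (Set.univ.pi fun d : {d // d ∈ Dset Dmax} => Set.Icc (0:ℝ) (m d.1)).Nonempty :=
      ⟨fun _ => 0, fun d _ => ⟨le_rfl, (hm d.1 d.2).le⟩⟩
    obtain ⟨z0, hz0, hmin0⟩ := hcpt.exists_isMinOn hbne hcont.continuousOn
    refine ⟨extend Dmax z0, ?_, ?_⟩
    · intro d hd
      have hmem := hz0 ⟨d, hd⟩ (Set.mem_univ _)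
      unfold extend
      rw [dif_pos hd]
      exact ⟨hmem.1, hmem.2⟩
    · intro y' hy'
      have hz' : (fun d : {d // d ∈ Dset Dmax} => y' d.1)
          ∈ Set.univ.pi fun d : {d // d ∈ Dset Dmax} => Set.Icc (0:ℝ) (m d.1) :=
        fun d _ => ⟨(hy' d.1 d.2).1, (hy' d.1 d.2).2⟩
      have h1 := isMinOn_iff.1 hmin0 _ hz'
      have h2 : SC Dmax m pP pU βIA τ LP LU cP K (extend Dmax (fun d => y' d.1))
          = SC Dmax m pP pU βIA τ LP LU cP K y' := by
        rw [hrepr, hrepr]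
        have e1 : slD Dmax (extend Dmax (fun d => y' d.1)) = slD Dmax y' :=
          Finset.sum_congr rfl fun d hd => by unfold extend; rw [dif_pos hd]
        have e2 : tlD Dmax (extend Dmax (fun d => y' d.1)) = tlD Dmax y' :=
          Finset.sum_congr rfl fun d hd => by unfold extend; rw [dif_pos hd]
        have e3 : ulD Dmax (extend Dmax (fun d => y' d.1)) = ulD Dmax y' :=
          Finset.sum_congr rfl fun d hd => by unfold extend; rw [dif_pos hd]
        rw [e1, e2, e3]
      calc SC Dmax m pP pU βIA τ LP LU cP K (extend Dmax z0)
          ≤ SC Dmax m pP pU βIA τ LP LU cP K (extend Dmax (fun d => y' d.1)) := h1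
        _ = SC Dmax m pP pU βIA τ LP LU cP K y' := h2
  · -- UNIQUENESS
    intro y1 y2 h1 h2
    obtain ⟨hp1, hmin1⟩ := h1
    obtain ⟨hp2, hmin2⟩ := h2
    rcases le_or_gt cP (τ * (LU - LP)) with hα | hα
    · -- case α ≤ 0 : every minimizer is full on 𝒟
      have hfull : ∀ y, isPlan Dmax m y →
          (∀ y', isPlan Dmax m y' →
            SC Dmax m pP pU βIA τ LP LU cP K y ≤ SC Dmax m pP pU βIA τ LP LU cP K y') →
          ∀ d0 ∈ Dset Dmax, y d0 = m d0 := by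
        intro y hpy hminy d0 hd0
        by_contra hne
        have hlt : y d0 < m d0 := lt_of_le_of_ne (hpy d0 hd0).2 hne
        have hp' : isPlan Dmax m (Function.update y d0 (m d0)) := by
          intro d hd
          rcases eq_or_ne d d0 with rfl | hdd
          · rw [Function.update_self]; exact ⟨(hm d hd).le, le_rfl⟩
          · rw [Function.update_of_ne hdd]; exact hpy d hd
        have hδ : 0 < m d0 - y d0 := by linarith
        have hd0r : (1:ℝ) ≤ (d0:ℝ) := one_le_cast hd0
        have hS' := slD_update Dmax y hd0 (m d0)
        have hT' := tlD_update Dmax y hd0 (m d0)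
        have hU' := ulD_update Dmax y hd0 (m d0)
        have hTM : tlD Dmax (Function.update y d0 (m d0)) ≤ M1v Dmax m := tlD_le hp'
        have hUC : ulD Dmax (Function.update y d0 (m d0)) ≤ Cv Dmax m := ulD_le hp'
        have hUC0 : ulD Dmax y ≤ Cv Dmax m := ulD_le hpy
        have hTlt : tlD Dmax y < tlD Dmax (Function.update y d0 (m d0)) := by
          rw [hT']
          nlinarith [mul_le_mul_of_nonneg_right hd0r hδ.le]
        have hUle2 : ulD Dmax y ≤ ulD Dmax (Function.update y d0 (m d0)) := by
          rw [hU']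
          nlinarith [mul_nonneg (mul_nonneg (by linarith : (0:ℝ) ≤ (d0:ℝ))
            (by linarith : (0:ℝ) ≤ (d0:ℝ) - 1)) hδ.le]
        have hGlt := Gq_strict hM1 hpP hp hβ0 hτ0 hLP hL hTlt hTM
        have hGnn := Gq_nonneg hM1 hpP hp hβ0 hτ0 hLP hL hTM
        have hHle := Hq_anti (K := K) hM1 hCnn hpP hp hβ0 hUle2 hUC
        have hH1 := Hq_one_le (K := K) hM1 hCnn hpP hp hβ0 hK hUC0
        have hbad : SC Dmax m pP pU βIA τ LP LU cP K (Function.update y d0 (m d0))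
            < SC Dmax m pP pU βIA τ LP LU cP K y := by
          rw [hrepr (Function.update y d0 (m d0)), hrepr y, hS']
          have p1 : Gq (M1v Dmax m) pP pU βIA τ LP LU (tlD Dmax (Function.update y d0 (m d0)))
                * Hq (M1v Dmax m) (Cv Dmax m) pP pU βIA K (ulD Dmax (Function.update y d0 (m d0)))
              ≤ Gq (M1v Dmax m) pP pU βIA τ LP LU (tlD Dmax (Function.update y d0 (m d0)))
                * Hq (M1v Dmax m) (Cv Dmax m) pP pU βIA K (ulD Dmax y) :=
            mul_le_mul_of_nonneg_left hHle hGnn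
          have p2 : Gq (M1v Dmax m) pP pU βIA τ LP LU (tlD Dmax (Function.update y d0 (m d0)))
                * Hq (M1v Dmax m) (Cv Dmax m) pP pU βIA K (ulD Dmax y)
              < Gq (M1v Dmax m) pP pU βIA τ LP LU (tlD Dmax y)
                * Hq (M1v Dmax m) (Cv Dmax m) pP pU βIA K (ulD Dmax y) :=
            mul_lt_mul_of_pos_right hGlt (by linarith)
          have p3 : (cP - τ * (LU - LP)) * (slD Dmax y + (m d0 - y d0))
              ≤ (cP - τ * (LU - LP)) * slD Dmax y := by
            nlinarith [mul_nonneg (sub_nonneg.2 hα) hδ.le]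
          linarith
        exact absurd (hminy _ hp') (not_le.2 hbad)
      intro d hd
      rw [hfull y1 hp1 hmin1 d hd, hfull y2 hp2 hmin2 d hd]
    · -- case α > 0
      have hαpos : 0 < cP - τ * (LU - LP) := by linarith
      -- threshold property of minimizers
      have hthr : ∀ y, isPlan Dmax m y →
          (∀ y', isPlan Dmax m y' →
            SC Dmax m pP pU βIA τ LP LU cP K y ≤ SC Dmax m pP pU βIA τ LP LU cP K y') →
          ∀ d1 ∈ Dset Dmax, ∀ d2 ∈ Dset Dmax,
            d1 < d2 → 0 < y d1 → y d2 < m d2 → False := by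
        intro y hpy hminy d1 hd1 d2 hd2 hdlt hy1 hy2
        have hr1 : (1:ℝ) ≤ (d1:ℝ) := one_le_cast hd1
        have hr2 : (1:ℝ) ≤ (d2:ℝ) := one_le_cast hd2
        have hr12 : (d1:ℝ) < (d2:ℝ) := by exact_mod_cast hdlt
        have hd1p : (0:ℝ) < (d1:ℝ) := by linarith
        have hd2p : (0:ℝ) < (d2:ℝ) := by linarith
        have hne21 : d2 ≠ d1 := ne_of_gt hdlt
        set ε := min ((d1:ℝ) * y d1) ((d2:ℝ) * (m d2 - y d2)) with hεdef
        have hε : 0 < ε := lt_min (mul_pos hd1p hy1) (mul_pos hd2p (by linarith))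
        have hε1 : ε ≤ (d1:ℝ) * y d1 := min_le_left _ _
        have hε2 : ε ≤ (d2:ℝ) * (m d2 - y d2) := min_le_right _ _
        have hεd1 : ε / (d1:ℝ) ≤ y d1 := by rw [div_le_iff₀ hd1p]; nlinarith
        have hεd2 : ε / (d2:ℝ) ≤ m d2 - y d2 := by rw [div_le_iff₀ hd2p]; nlinarith
        have hεd1p : 0 < ε / (d1:ℝ) := div_pos hε hd1p
        have hεd2p : 0 < ε / (d2:ℝ) := div_pos hε hd2p
        have hp' : isPlan Dmax m (Function.update
            (Function.update y d1 (y d1 - ε / (d1:ℝ))) d2 (y d2 + ε / (d2:ℝ))) := by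
          intro d hd
          rcases eq_or_ne d d2 with rfl | hdd2
          · rw [Function.update_self]
            exact ⟨by linarith [(hpy d hd).1], by linarith⟩
          · rw [Function.update_of_ne hdd2]
            rcases eq_or_ne d d1 with rfl | hdd1
            · rw [Function.update_self]
              exact ⟨by linarith, by linarith [(hpy d hd).2]⟩
            · rw [Function.update_of_ne hdd1]; exact hpy d hd
        have hud2 : Function.update y d1 (y d1 - ε / (d1:ℝ)) d2 = y d2 :=
          Function.update_of_ne hne21 _ _
        have hS' : slD Dmax (Function.update
              (Function.update y d1 (y d1 - ε / (d1:ℝ))) d2 (y d2 + ε / (d2:ℝ)))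
            = slD Dmax y - ε / (d1:ℝ) + ε / (d2:ℝ) := by
          rw [slD_update Dmax _ hd2, hud2, slD_update Dmax y hd1]
          ring
        have hT' : tlD Dmax (Function.update
              (Function.update y d1 (y d1 - ε / (d1:ℝ))) d2 (y d2 + ε / (d2:ℝ)))
            = tlD Dmax y := by
          rw [tlD_update Dmax _ hd2, hud2, tlD_update Dmax y hd1]
          have e1 : (d1:ℝ) * (y d1 - ε / (d1:ℝ) - y d1) = -ε := by
            field_simp
            ring
          have e2 : (d2:ℝ) * (y d2 + ε / (d2:ℝ) - y d2) = ε := by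
            field_simp
            ring
          rw [e1, e2]; ring
        have hU' : ulD Dmax (Function.update
              (Function.update y d1 (y d1 - ε / (d1:ℝ))) d2 (y d2 + ε / (d2:ℝ)))
            = ulD Dmax y - ((d1:ℝ) - 1) * ε + ((d2:ℝ) - 1) * ε := by
          rw [ulD_update Dmax _ hd2, hud2, ulD_update Dmax y hd1]
          have e1 : (d1:ℝ) * ((d1:ℝ) - 1) * (y d1 - ε / (d1:ℝ) - y d1)
              = -(((d1:ℝ) - 1) * ε) := by
            field_simp; ring
          have e2 : (d2:ℝ) * ((d2:ℝ) - 1) * (y d2 + ε / (d2:ℝ) - y d2)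
              = ((d2:ℝ) - 1) * ε := by
            field_simp; ring
          rw [e1, e2]; ring
        have hSlt : slD Dmax (Function.update
              (Function.update y d1 (y d1 - ε / (d1:ℝ))) d2 (y d2 + ε / (d2:ℝ)))
            < slD Dmax y := by
          rw [hS']
          have hdd : ε / (d2:ℝ) < ε / (d1:ℝ) := div_lt_div_of_pos_left hε hd1p hr12
          linarith
        have hUle2 : ulD Dmax y ≤ ulD Dmax (Function.update
              (Function.update y d1 (y d1 - ε / (d1:ℝ))) d2 (y d2 + ε / (d2:ℝ))) := by
          rw [hU']
          nlinarith [mul_nonneg (by linarith : (0:ℝ) ≤ (d2:ℝ) - (d1:ℝ)) hε.le]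
        have hUC' : ulD Dmax (Function.update
              (Function.update y d1 (y d1 - ε / (d1:ℝ))) d2 (y d2 + ε / (d2:ℝ)))
            ≤ Cv Dmax m := ulD_le hp'
        have hTM : tlD Dmax y ≤ M1v Dmax m := tlD_le hpy
        have hGnn := Gq_nonneg hM1 hpP hp hβ0 hτ0 hLP hL hTM
        have hHle := Hq_anti (K := K) hM1 hCnn hpP hp hβ0 hUle2 hUC'
        have hbad : SC Dmax m pP pU βIA τ LP LU cP K (Function.update
              (Function.update y d1 (y d1 - ε / (d1:ℝ))) d2 (y d2 + ε / (d2:ℝ)))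
            < SC Dmax m pP pU βIA τ LP LU cP K y := by
          rw [hrepr, hrepr y, hT']
          have p1 : Gq (M1v Dmax m) pP pU βIA τ LP LU (tlD Dmax y)
                * Hq (M1v Dmax m) (Cv Dmax m) pP pU βIA K (ulD Dmax (Function.update
                    (Function.update y d1 (y d1 - ε / (d1:ℝ))) d2 (y d2 + ε / (d2:ℝ))))
              ≤ Gq (M1v Dmax m) pP pU βIA τ LP LU (tlD Dmax y)
                * Hq (M1v Dmax m) (Cv Dmax m) pP pU βIA K (ulD Dmax y) :=
            mul_le_mul_of_nonneg_left hHle hGnn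
          have p2 : (cP - τ * (LU - LP)) * slD Dmax (Function.update
                (Function.update y d1 (y d1 - ε / (d1:ℝ))) d2 (y d2 + ε / (d2:ℝ)))
              < (cP - τ * (LU - LP)) * slD Dmax y :=
            mul_lt_mul_of_pos_left hSlt hαpos
          linarith
        exact absurd (hminy _ hp') (not_le.2 hbad)
      -- any two minimizers are comparable
      have horder : (∀ d ∈ Dset Dmax, y1 d ≤ y2 d) ∨ (∀ d ∈ Dset Dmax, y2 d ≤ y1 d) := by
        by_contra hc
        push_neg at hc
        obtain ⟨⟨a, ha, hay⟩, ⟨b, hb, hby⟩⟩ := hc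
        rcases lt_trichotomy a b with hab | hab | hab
        · exact hthr y1 hp1 hmin1 a ha b hb hab
            (lt_of_le_of_lt (hp2 a ha).1 hay) (lt_of_lt_of_le hby (hp2 b hb).2)
        · subst hab; linarith
        · exact hthr y2 hp2 hmin2 b hb a ha hab
            (lt_of_le_of_lt (hp1 b hb).1 hby) (lt_of_lt_of_le hay (hp1 a ha).2)
      -- midpoint argument kills distinct comparable minimizers
      have hkey : ∀ ya yb, isPlan Dmax m ya → isPlan Dmax m yb →
          (∀ y', isPlan Dmax m y' →
            SC Dmax m pP pU βIA τ LP LU cP K ya ≤ SC Dmax m pP pU βIA τ LP LU cP K y') →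
          (∀ y', isPlan Dmax m y' →
            SC Dmax m pP pU βIA τ LP LU cP K yb ≤ SC Dmax m pP pU βIA τ LP LU cP K y') →
          (∀ d ∈ Dset Dmax, ya d ≤ yb d) → ∀ d0 ∈ Dset Dmax, yb d0 ≤ ya d0 := by
        intro ya yb hpa hpb hma hmb hle d0 hd0
        by_contra hq
        push_neg at hq
        have hd0p : (0:ℝ) < (d0:ℝ) := lt_of_lt_of_le one_pos (one_le_cast hd0)
        have hpz : isPlan Dmax m (fun n => (ya n + yb n) / 2) := by
          intro d hd
          obtain ⟨ha1, ha2⟩ := hpa d hd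
          obtain ⟨hb1, hb2⟩ := hpb d hd
          exact ⟨by dsimp; linarith, by dsimp; linarith⟩
        have hSz : slD Dmax (fun n => (ya n + yb n) / 2)
            = (slD Dmax ya + slD Dmax yb) / 2 := by
          unfold slD
          rw [← Finset.sum_div, Finset.sum_add_distrib]
        have hTz : tlD Dmax (fun n => (ya n + yb n) / 2)
            = (tlD Dmax ya + tlD Dmax yb) / 2 := by
          unfold tlD
          rw [Finset.sum_congr rfl (fun (d : ℕ) _ => show
              (d:ℝ) * ((ya d + yb d) / 2) = ((d:ℝ) * ya d + (d:ℝ) * yb d) / 2 from by ring),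
            ← Finset.sum_div, Finset.sum_add_distrib]
        have hUz : ulD Dmax (fun n => (ya n + yb n) / 2)
            = (ulD Dmax ya + ulD Dmax yb) / 2 := by
          unfold ulD
          rw [Finset.sum_congr rfl (fun (d : ℕ) _ => show
              (d:ℝ) * ((d:ℝ) - 1) * ((ya d + yb d) / 2)
                = ((d:ℝ) * ((d:ℝ) - 1) * ya d + (d:ℝ) * ((d:ℝ) - 1) * yb d) / 2 from by ring),
            ← Finset.sum_div, Finset.sum_add_distrib]
        have hT12 : tlD Dmax ya < tlD Dmax yb := by
          apply Finset.sum_lt_sum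
          · intro d hd
            exact mul_le_mul_of_nonneg_left (hle d hd) (by positivity)
          · exact ⟨d0, hd0, mul_lt_mul_of_pos_left hq hd0p⟩
        have hU12 : ulD Dmax ya ≤ ulD Dmax yb := by
          apply Finset.sum_le_sum
          intro d hd
          have h1 := one_le_cast hd
          exact mul_le_mul_of_nonneg_left (hle d hd)
            (mul_nonneg (by linarith) (by linarith))
        have hT2M : tlD Dmax yb ≤ M1v Dmax m := tlD_le hpb
        have hU1C : ulD Dmax ya ≤ Cv Dmax m := ulD_le hpa
        have hU2C : ulD Dmax yb ≤ Cv Dmax m := ulD_le hpb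
        have hGmid := Gq_mid (pP := pP) (pU := pU) (βIA := βIA) (τ := τ) (LP := LP)
          (LU := LU) (x := tlD Dmax ya) (x' := tlD Dmax yb) hM1ne
        have hδ : 0 < τ * βIA * (pU - pP) * (LU - LP) * (tlD Dmax yb - tlD Dmax ya) ^ 2
            / (4 * M1v Dmax m) := by
          have h2 : 0 < (tlD Dmax yb - tlD Dmax ya) ^ 2 := pow_pos (by linarith) 2
          have hnum : 0 < τ * βIA * (pU - pP) * (LU - LP) * (tlD Dmax yb - tlD Dmax ya) ^ 2 :=
            mul_pos (mul_pos (mul_pos (mul_pos hτ0 hβ0) (by linarith)) (by linarith)) h2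
          exact div_pos hnum (by linarith)
        have hmidT : (tlD Dmax ya + tlD Dmax yb) / 2 ≤ M1v Dmax m := by linarith
        have hmidU : (ulD Dmax ya + ulD Dmax yb) / 2 ≤ Cv Dmax m := by linarith
        have hGznn := Gq_nonneg hM1 hpP hp hβ0 hτ0 hLP hL hmidT
        have hHmid := Hq_mid (K := K) hM1 hCnn hpP hp hβ0 hU1C hU2C
        have hG21 := (Gq_strict hM1 hpP hp hβ0 hτ0 hLP hL hT12 hT2M).le
        have hH21 := Hq_anti (K := K) hM1 hCnn hpP hp hβ0 hU12 hU2C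
        have hG2nn := Gq_nonneg hM1 hpP hp hβ0 hτ0 hLP hL hT2M
        have hH1g := Hq_one_le (K := K) hM1 hCnn hpP hp hβ0 hK hU1C
        have hH2g := Hq_one_le (K := K) hM1 hCnn hpP hp hβ0 hK hU2C
        have hprod : Gq (M1v Dmax m) pP pU βIA τ LP LU ((tlD Dmax ya + tlD Dmax yb) / 2)
              * Hq (M1v Dmax m) (Cv Dmax m) pP pU βIA K ((ulD Dmax ya + ulD Dmax yb) / 2)
            ≤ Gq (M1v Dmax m) pP pU βIA τ LP LU ((tlD Dmax ya + tlD Dmax yb) / 2)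
              * ((Hq (M1v Dmax m) (Cv Dmax m) pP pU βIA K (ulD Dmax ya)
                  + Hq (M1v Dmax m) (Cv Dmax m) pP pU βIA K (ulD Dmax yb)) / 2) :=
          mul_le_mul_of_nonneg_left hHmid hGznn
        have hkey2 : Gq (M1v Dmax m) pP pU βIA τ LP LU ((tlD Dmax ya + tlD Dmax yb) / 2)
              * ((Hq (M1v Dmax m) (Cv Dmax m) pP pU βIA K (ulD Dmax ya)
                  + Hq (M1v Dmax m) (Cv Dmax m) pP pU βIA K (ulD Dmax yb)) / 2)
            < (Gq (M1v Dmax m) pP pU βIA τ LP LU (tlD Dmax ya)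
                  * Hq (M1v Dmax m) (Cv Dmax m) pP pU βIA K (ulD Dmax ya)
                + Gq (M1v Dmax m) pP pU βIA τ LP LU (tlD Dmax yb)
                  * Hq (M1v Dmax m) (Cv Dmax m) pP pU βIA K (ulD Dmax yb)) / 2 := by
          rw [hGmid]
          nlinarith [mul_nonneg (sub_nonneg.2 hG21) (sub_nonneg.2 hH21), hδ,
            mul_nonneg hδ.le (by linarith :
              (0:ℝ) ≤ Hq (M1v Dmax m) (Cv Dmax m) pP pU βIA K (ulD Dmax ya)
                + Hq (M1v Dmax m) (Cv Dmax m) pP pU βIA K (ulD Dmax yb) - 2)]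
        have hFab : SC Dmax m pP pU βIA τ LP LU cP K ya
            = SC Dmax m pP pU βIA τ LP LU cP K yb :=
          le_antisymm (hma yb hpb) (hmb ya hpa)
        have hFz := hma _ hpz
        have ez := hrepr (fun n => (ya n + yb n) / 2)
        rw [hSz, hTz, hUz] at ez
        have ea := hrepr ya
        have eb := hrepr yb
        linarith [hprod, hkey2]
      intro d hd
      rcases horder with hor | hor
      · exact le_antisymm (hor d hd) (hkey y1 y2 hp1 hp2 hmin1 hmin2 hor d hd)
      · exact le_antisymm (hkey y2 y1 hp2 hp1 hmin2 hmin1 hor d hd) (hor d hd)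
end
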